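/- arXiv:1005.2029 — 2 statements merged into one kernel-verified Lean document; each statement's English description precedes it below -/
import Mathlib

section
/- Fix positive integers L and S, let β ∈ (0,1) satisfy Lβ + Sβ² = 1, and let {ρⁿ} be the LS-sequence of partitions of [0,1), with left endpoints y₁ⁿ, …, y_{tₙ}ⁿ. Then the discrepancy D(ρⁿ) = sup_{0≤a<b≤1} |(1/tₙ)·#{j : a ≤ yⱼⁿ < b} − (b − a)| tends to 0 as n → ∞; equivalently, the sequence of partitions {ρⁿ} is uniformly distributed. -/
open Filter

open Classical in
/-- The LS-sequence of partitions of `[0,1)`, encoded as the list of lengths of its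
intervals, from left to right. -/
noncomputable def LSpart (L S : ℕ) (β : ℝ) : ℕ → List ℝ
  | 0 => [1]
  | n + 1 => (LSpart L S β n).flatMap (fun x =>
      if x = β ^ n then
        List.replicate L (β ^ (n + 1)) ++ List.replicate S (β ^ (n + 2))
      else [x])

/-- Left endpoint of the `j`-th (0-indexed) interval of `ρⁿ`. -/
noncomputable def lep (L S : ℕ) (β : ℝ) (n j : ℕ) : ℝ := ((LSpart L S β n).take j).sum

/-- The discrepancy
`D(ρⁿ) = sup_{0 ≤ a < b ≤ 1} |(1/tₙ)·#{j : a ≤ yⱼⁿ < b} − (b − a)|`. -/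
noncomputable def disc (L S : ℕ) (β : ℝ) (n : ℕ) : ℝ :=
  sSup {x : ℝ | ∃ a b : ℝ, 0 ≤ a ∧ a < b ∧ b ≤ 1 ∧
    x = |(({j : Fin (LSpart L S β n).length |
            a ≤ lep L S β n j ∧ lep L S β n j < b}).ncard : ℝ) /
          ((LSpart L S β n).length : ℝ) - (b - a)|}

open Classical in
/-- Number of entries `h` of the list, with running offset starting at `o`,
satisfying `p offset h`. -/
noncomputable def pcnt (p : ℝ → ℝ → Prop) : List ℝ → ℝ → ℕ
  | [], _ => 0
  | h :: t, o => (if p o h then 1 else 0) + pcnt p t (o + h)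

open Classical in
/-- Total length of the intervals contained in `[0, x]`. -/
noncomputable def plen (x : ℝ) : List ℝ → ℝ → ℝ
  | [], _ => 0
  | h :: t, o => (if o + h ≤ x then h else 0) + plen x t (o + h)

@[simp] lemma pcnt_nil (p : ℝ → ℝ → Prop) (o : ℝ) : pcnt p [] o = 0 := rfl

open Classical in
lemma pcnt_cons (p : ℝ → ℝ → Prop) (h : ℝ) (t : List ℝ) (o : ℝ) :
    pcnt p (h :: t) o = (if p o h then 1 else 0) + pcnt p t (o + h) := rfl

@[simp] lemma plen_nil (x o : ℝ) : plen x [] o = 0 := rfl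

open Classical in
lemma plen_cons (x h : ℝ) (t : List ℝ) (o : ℝ) :
    plen x (h :: t) o = (if o + h ≤ x then h else 0) + plen x t (o + h) := rfl

lemma pcnt_append (p : ℝ → ℝ → Prop) (l₁ l₂ : List ℝ) (o : ℝ) :
    pcnt p (l₁ ++ l₂) o = pcnt p l₁ o + pcnt p l₂ (o + l₁.sum) := by
  induction l₁ generalizing o with
  | nil => simp
  | cons h t ih => simp [pcnt_cons, ih, add_assoc]

lemma pcnt_le_length (p : ℝ → ℝ → Prop) (l : List ℝ) (o : ℝ) :
    pcnt p l o ≤ l.length := by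
  induction l generalizing o with
  | nil => simp
  | cons h t ih =>
    rw [pcnt_cons]
    have := ih (o + h)
    split <;> simp <;> omega

open Classical in
lemma pcnt_congr (p q : ℝ → ℝ → Prop) (l : List ℝ) (o : ℝ)
    (h : ∀ o' y, y ∈ l → (p o' y ↔ q o' y)) : pcnt p l o = pcnt q l o := by
  induction l generalizing o with
  | nil => simp
  | cons a t ih =>
    rw [pcnt_cons, pcnt_cons,
      ih _ fun o' y hy => h o' y (List.mem_cons_of_mem _ hy)]
    congr 1
    exact if_congr (h o a (by simp)) rfl rfl

open Classical in
lemma pcnt_eq_zero (p : ℝ → ℝ → Prop) (l : List ℝ) (o : ℝ)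
    (h : ∀ o' y, y ∈ l → ¬ p o' y) : pcnt p l o = 0 := by
  induction l generalizing o with
  | nil => simp
  | cons a t ih =>
    rw [pcnt_cons, if_neg (h o a (by simp)),
      ih _ fun o' y hy => h o' y (List.mem_cons_of_mem _ hy)]

open Classical in
lemma pcnt_replicate_full (v x : ℝ) (m : ℕ) (o : ℝ) (hv : 0 < v)
    (hx : o + m * v ≤ x) :
    pcnt (fun o' h => o' + h ≤ x ∧ h = v) (List.replicate m v) o = m := by
  induction m generalizing o with
  | zero => simp
  | succ k ih =>
    have hk : (0:ℝ) ≤ k := Nat.cast_nonneg k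
    have hx1 : o + v + (k:ℝ) * v ≤ x := by push_cast at hx; nlinarith
    have hx2 : o + v ≤ x := by nlinarith
    rw [List.replicate_succ, pcnt_cons, if_pos ⟨hx2, rfl⟩, ih (o + v) hx1]
    omega

open Classical in
lemma card_filter_pcnt (p : ℝ → Prop) (l : List ℝ) (o : ℝ) :
    (Finset.univ.filter (fun j : Fin l.length => p (o + (l.take (j : ℕ)).sum))).card
      = pcnt (fun o' _ => p o') l o := by
  induction l generalizing o with
  | nil => simp
  | cons h t ih =>
    simp only [List.length_cons, Finset.card_filter]
    rw [Fin.sum_univ_succ]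
    simp only [Fin.val_zero, List.take_zero, List.sum_nil, add_zero, Fin.val_succ,
      List.take_succ_cons, List.sum_cons, ← add_assoc]
    rw [pcnt_cons, ← ih (o + h), Finset.card_filter]

open Classical in
lemma ncard_pcnt (p : ℝ → Prop) (l : List ℝ) :
    ({j : Fin l.length | p ((l.take (j : ℕ)).sum)}).ncard
      = pcnt (fun o' _ => p o') l 0 := by
  have : {j : Fin l.length | p ((l.take (j : ℕ)).sum)}
      = ↑(Finset.univ.filter (fun j : Fin l.length => p (0 + (l.take (j : ℕ)).sum))) := by
    ext j; simp
  rw [this, Set.ncard_coe_finset, card_filter_pcnt]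

open Classical in
lemma pcnt_cv_zero (x v : ℝ) (l : List ℝ) (hl : ∀ y ∈ l, 0 < y) (o : ℝ) (ho : x ≤ o) :
    pcnt (fun o' h => o' + h ≤ x ∧ h = v) l o = 0 := by
  induction l generalizing o with
  | nil => simp
  | cons a t ih =>
    have ha : 0 < a := hl a (by simp)
    rw [pcnt_cons, if_neg, ih (fun y hy => hl y (List.mem_cons_of_mem _ hy)) _ (by linarith)]
    rintro ⟨h1, -⟩
    linarith

section LS

variable {L S : ℕ} {β : ℝ}

lemma mem_LSpart (hL : 0 < L) (hβ0 : 0 < β) (hβ1 : β < 1) (n : ℕ) :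
    ∀ y ∈ LSpart L S β n, y = β ^ n ∨ y = β ^ (n + 1) := by
  induction n with
  | zero => intro y hy; rw [LSpart] at hy; simp at hy; simp [hy]
  | succ n ih =>
    intro y hy
    rw [LSpart, List.mem_flatMap] at hy
    obtain ⟨a, ha, hya⟩ := hy
    rcases ih a ha with h | h
    · rw [if_pos h, List.mem_append] at hya
      rcases hya with h' | h' <;> rw [List.eq_of_mem_replicate h']
      · left; rfl
      · right; rfl
    · have hne : a ≠ β ^ n := by
        rw [h]; exact ne_of_lt (pow_lt_pow_right_of_lt_one₀ hβ0 hβ1 (Nat.lt_succ_self n))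
      rw [if_neg hne, List.mem_singleton] at hya
      left; rw [hya, h]

lemma pos_of_mem_LSpart (hL : 0 < L) (hβ0 : 0 < β) (hβ1 : β < 1) (n : ℕ) :
    ∀ y ∈ LSpart L S β n, 0 < y := by
  intro y hy
  rcases mem_LSpart hL hβ0 hβ1 n y hy with h | h <;> rw [h] <;> positivity

lemma LSpart_le (hL : 0 < L) (hβ0 : 0 < β) (hβ1 : β < 1) (n : ℕ) :
    ∀ y ∈ LSpart L S β n, y ≤ β ^ n := by
  intro y hy
  rcases mem_LSpart hL hβ0 hβ1 n y hy with h | h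
  · rw [h]
  · rw [h]
    exact le_of_lt (pow_lt_pow_right_of_lt_one₀ hβ0 hβ1 (Nat.lt_succ_self n))

lemma sum_LSpart (hL : 0 < L) (hβ0 : 0 < β) (hβ1 : β < 1)
    (hβ : (L : ℝ) * β + (S : ℝ) * β ^ 2 = 1) (n : ℕ) :
    (LSpart L S β n).sum = 1 := by
  induction n with
  | zero => rw [LSpart]; simp
  | succ n ih =>
    rw [LSpart]
    have key : ∀ (l : List ℝ), (∀ y ∈ l, y = β ^ n ∨ y = β ^ (n + 1)) →
        (l.flatMap (fun x => if x = β ^ n then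
          List.replicate L (β ^ (n + 1)) ++ List.replicate S (β ^ (n + 2))
        else [x])).sum = l.sum := by
      intro l hl
      induction l with
      | nil => simp
      | cons a t iht =>
        rw [List.flatMap_cons, List.sum_append, List.sum_cons,
          iht (fun y hy => hl y (List.mem_cons_of_mem _ hy))]
        congr 1
        rcases hl a (by simp) with h | h
        · rw [if_pos h, List.sum_append, List.sum_replicate, List.sum_replicate,
            nsmul_eq_mul, nsmul_eq_mul, h]
          have e1 : (β:ℝ) ^ (n+1) = β^n * β := by ring
          have e2 : (β:ℝ) ^ (n+2) = β^n * β^2 := by ring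
          subst h; rw [e1, e2]; linear_combination (β^n) * hβ
        · have hne : a ≠ β ^ n := by
            rw [h]; exact ne_of_lt (pow_lt_pow_right_of_lt_one₀ hβ0 hβ1 (Nat.lt_succ_self n))
          rw [if_neg hne]; simp
    rw [key _ (mem_LSpart hL hβ0 hβ1 n), ih]

lemma LSpart_ne_nil (hL : 0 < L) (hβ0 : 0 < β) (hβ1 : β < 1)
    (hβ : (L : ℝ) * β + (S : ℝ) * β ^ 2 = 1) (n : ℕ) : LSpart L S β n ≠ [] := by
  intro h
  have := sum_LSpart hL hβ0 hβ1 hβ n (L := L) (S := S)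
  rw [h] at this
  simp at this

end LS

open Classical in
/-- The subdivision rule at step `n`. -/
noncomputable def Gstep (L S : ℕ) (β : ℝ) (n : ℕ) : ℝ → List ℝ := fun y =>
  if y = β ^ n then List.replicate L (β ^ (n + 1)) ++ List.replicate S (β ^ (n + 2)) else [y]

lemma LSpart_succ_eq (L S : ℕ) (β : ℝ) (n : ℕ) :
    LSpart L S β (n + 1) = (LSpart L S β n).flatMap (Gstep L S β n) := by
  rw [LSpart]; rfl

section LS2

variable {L S : ℕ} {β : ℝ}

lemma sum_Gstep (hβ0 : 0 < β) (hβ1 : β < 1) (hβ : (L : ℝ) * β + (S : ℝ) * β ^ 2 = 1)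
    {n : ℕ} {a : ℝ} (ha : a = β ^ n ∨ a = β ^ (n + 1)) : (Gstep L S β n a).sum = a := by
  rcases ha with h | h
  · rw [Gstep, if_pos h, List.sum_append, List.sum_replicate, List.sum_replicate,
      nsmul_eq_mul, nsmul_eq_mul]
    have e1 : (β:ℝ) ^ (n+1) = β^n * β := by ring
    have e2 : (β:ℝ) ^ (n+2) = β^n * β^2 := by ring
    subst h; rw [e1, e2]; linear_combination (β^n) * hβ
  · have hne : a ≠ β ^ n := by
      rw [h]; exact ne_of_lt (pow_lt_pow_right_of_lt_one₀ hβ0 hβ1 (Nat.lt_succ_self n))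
    rw [Gstep, if_neg hne]; simp

open Classical in
lemma pcnt_cv_replicate_ne (x v w : ℝ) (hvw : w ≠ v) (m : ℕ) (o : ℝ) :
    pcnt (fun o' h => o' + h ≤ x ∧ h = v) (List.replicate m w) o = 0 := by
  apply pcnt_eq_zero
  intro o' y hy
  rw [List.eq_of_mem_replicate hy]
  rintro ⟨-, h⟩
  exact hvw h

open Classical in
lemma rec_step (hL : 0 < L) (hS : 0 < S) (hβ0 : 0 < β) (hβ1 : β < 1)
    (hβ : (L : ℝ) * β + (S : ℝ) * β ^ 2 = 1) (n : ℕ) (x : ℝ) :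
    ∀ (l : List ℝ), (∀ y ∈ l, y = β ^ n ∨ y = β ^ (n + 1)) → ∀ (o : ℝ),
    (L * pcnt (fun o' h => o' + h ≤ x ∧ h = β^n) l o
        + pcnt (fun o' h => o' + h ≤ x ∧ h = β^(n+1)) l o
        ≤ pcnt (fun o' h => o' + h ≤ x ∧ h = β^(n+1)) (l.flatMap (Gstep L S β n)) o
      ∧ pcnt (fun o' h => o' + h ≤ x ∧ h = β^(n+1)) (l.flatMap (Gstep L S β n)) o
        ≤ L * pcnt (fun o' h => o' + h ≤ x ∧ h = β^n) l o
          + pcnt (fun o' h => o' + h ≤ x ∧ h = β^(n+1)) l o + (if o < x then L else 0))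
    ∧ (S * pcnt (fun o' h => o' + h ≤ x ∧ h = β^n) l o
        ≤ pcnt (fun o' h => o' + h ≤ x ∧ h = β^(n+2)) (l.flatMap (Gstep L S β n)) o
      ∧ pcnt (fun o' h => o' + h ≤ x ∧ h = β^(n+2)) (l.flatMap (Gstep L S β n)) o
        ≤ S * pcnt (fun o' h => o' + h ≤ x ∧ h = β^n) l o + (if o < x then S else 0)) := by
  have hβn : (0:ℝ) < β ^ n := by positivity
  have h1 : (0:ℝ) < β ^ (n+1) := by positivity
  have h2 : (0:ℝ) < β ^ (n+2) := by positivity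
  have hlt1 : β ^ (n+1) < β ^ n := pow_lt_pow_right_of_lt_one₀ hβ0 hβ1 (Nat.lt_succ_self n)
  have hlt2 : β ^ (n+2) < β ^ (n+1) :=
    pow_lt_pow_right_of_lt_one₀ hβ0 hβ1 (Nat.lt_succ_self (n+1))
  have hsum : (L:ℝ) * β ^ (n+1) + (S:ℝ) * β ^ (n+2) = β ^ n := by
    have e1 : (β:ℝ) ^ (n+1) = β^n * β := by ring
    have e2 : (β:ℝ) ^ (n+2) = β^n * β^2 := by ring
    rw [e1, e2]; linear_combination (β^n) * hβ
  have hSpos : (0:ℝ) ≤ (S:ℝ) * β ^ (n+2) := by positivity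
  have hLpos : (0:ℝ) ≤ (L:ℝ) * β ^ (n+1) := by positivity
  intro l
  induction l with
  | nil => intro _ o; simp
  | cons a t ih =>
    intro hl o
    have hlt : ∀ y ∈ t, y = β ^ n ∨ y = β ^ (n + 1) :=
      fun y hy => hl y (List.mem_cons_of_mem _ hy)
    obtain ⟨⟨ih1, ih2⟩, ih3, ih4⟩ := ih hlt (o + a)
    have hGsum : (Gstep L S β n a).sum = a := sum_Gstep hβ0 hβ1 hβ (hl a (by simp))
    have hapos : 0 < a := by rcases hl a (by simp) with h | h <;> rw [h] <;> positivity
    have hifL : (if o + a < x then L else 0) ≤ (if o < x then L else 0) := by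
      split
      · rw [if_pos (by linarith)]
      · split <;> omega
    have hifS : (if o + a < x then S else 0) ≤ (if o < x then S else 0) := by
      split
      · rw [if_pos (by linarith)]
      · split <;> omega
    rcases hl a (by simp) with h | h
    · -- long parent
      subst h
      have hG : Gstep L S β n (β^n)
          = List.replicate L (β^(n+1)) ++ List.replicate S (β^(n+2)) := by
        show (if (β:ℝ)^n = β^n then _ else _) = _
        rw [if_pos rfl]
      have hne1 : ¬((β:ℝ)^n = β^(n+1)) := ne_of_gt hlt1
      rw [hG] at hGsum
      simp only [List.flatMap_cons, hG, pcnt_append, List.sum_append, List.sum_replicate,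
        nsmul_eq_mul, hGsum, pcnt_cons, eq_self_iff_true, and_true, hne1, and_false,
        if_false, zero_add, add_zero]
      have c2 : pcnt (fun o' h => o' + h ≤ x ∧ h = β^(n+1))
          (List.replicate S (β^(n+2))) (o + ↑L * β^(n+1)) = 0 :=
        pcnt_cv_replicate_ne x _ _ (ne_of_lt hlt2) S _
      have d1 : pcnt (fun o' h => o' + h ≤ x ∧ h = β^(n+2))
          (List.replicate L (β^(n+1))) o = 0 :=
        pcnt_cv_replicate_ne x _ _ (ne_of_gt hlt2) L o
      have c1le : pcnt (fun o' h => o' + h ≤ x ∧ h = β^(n+1))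
          (List.replicate L (β^(n+1))) o ≤ L := by
        simpa using pcnt_le_length _ (List.replicate L (β^(n+1))) o
      have d2le : pcnt (fun o' h => o' + h ≤ x ∧ h = β^(n+2))
          (List.replicate S (β^(n+2))) (o + ↑L * β^(n+1)) ≤ S := by
        simpa using pcnt_le_length _ (List.replicate S (β^(n+2))) (o + ↑L * β^(n+1))
      by_cases hox : o + β^n ≤ x
      · have ho : o < x := by linarith
        have hc1 : pcnt (fun o' h => o' + h ≤ x ∧ h = β^(n+1))
            (List.replicate L (β^(n+1))) o = L :=
          pcnt_replicate_full _ _ _ _ h1 (by linarith)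
        have hd2 : pcnt (fun o' h => o' + h ≤ x ∧ h = β^(n+2))
            (List.replicate S (β^(n+2))) (o + ↑L * β^(n+1)) = S :=
          pcnt_replicate_full _ _ _ _ h2 (by linarith)
        rw [if_pos ho] at hifL hifS
        simp only [if_pos hox, if_pos ho]
        refine ⟨⟨?_, ?_⟩, ?_, ?_⟩ <;> linarith
      · have hnox : ¬(o + β^n < x) := fun hh => hox (le_of_lt hh)
        rw [if_neg hnox] at ih2 ih4
        simp only [if_neg hox, zero_add, add_zero] at *
        by_cases ho : o < x
        · simp only [if_pos ho]
          refine ⟨⟨?_, ?_⟩, ?_, ?_⟩ <;> linarith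
        · have hxo : x ≤ o := le_of_not_gt ho
          have hc1 : pcnt (fun o' h => o' + h ≤ x ∧ h = β^(n+1))
              (List.replicate L (β^(n+1))) o = 0 :=
            pcnt_cv_zero x _ _ (fun y hy => by rw [List.eq_of_mem_replicate hy]; positivity)
              o hxo
          have hd2 : pcnt (fun o' h => o' + h ≤ x ∧ h = β^(n+2))
              (List.replicate S (β^(n+2))) (o + ↑L * β^(n+1)) = 0 :=
            pcnt_cv_zero x _ _ (fun y hy => by rw [List.eq_of_mem_replicate hy]; positivity)
              _ (by linarith)
          simp only [if_neg ho]
          refine ⟨⟨?_, ?_⟩, ?_, ?_⟩ <;> linarith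
    · -- short parent
      subst h
      have hne : (β:ℝ)^(n+1) ≠ β^n := ne_of_lt hlt1
      have hG : Gstep L S β n (β^(n+1)) = [β^(n+1)] := by
        show (if (β:ℝ)^(n+1) = β^n then _ else _) = _
        rw [if_neg hne]
      have hne2 : ¬((β:ℝ)^(n+1) = β^(n+2)) := ne_of_gt hlt2
      rw [hG] at hGsum
      simp only [List.flatMap_cons, hG, pcnt_cons, pcnt_nil, pcnt_append, hGsum,
        List.sum_cons, List.sum_nil, eq_self_iff_true, and_true, hne, hne2, and_false,
        if_false, zero_add, add_zero]
      refine ⟨⟨?_, ?_⟩, ?_, ?_⟩ <;>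
        [skip; skip; skip; skip] <;>
        first
          | linarith
          | (by_cases hoa : o + β^(n+1) ≤ x
             · simp only [if_pos hoa]; linarith
             · simp only [if_neg hoa]; linarith)
end LS2

section LS3

variable {L S : ℕ} {β : ℝ}

open Classical in
lemma pcnt_split (n : ℕ) (x : ℝ) (hβ0 : 0 < β) (hβ1 : β < 1) :
    ∀ (l : List ℝ), (∀ y ∈ l, y = β ^ n ∨ y = β ^ (n + 1)) → ∀ (o : ℝ),
    pcnt (fun o' h => o' + h ≤ x ∧ h = β^n) l o
      + pcnt (fun o' h => o' + h ≤ x ∧ h = β^(n+1)) l o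
      = pcnt (fun o' h => o' + h ≤ x) l o := by
  have hlt1 : β ^ (n+1) < β ^ n := pow_lt_pow_right_of_lt_one₀ hβ0 hβ1 (Nat.lt_succ_self n)
  intro l
  induction l with
  | nil => simp
  | cons a t ih =>
    intro hl o
    have iht := ih (fun y hy => hl y (List.mem_cons_of_mem _ hy)) (o + a)
    simp only [pcnt_cons]
    rcases hl a (by simp) with h | h <;> subst h
    · simp only [eq_self_iff_true, and_true, (show ¬((β:ℝ)^n = β^(n+1)) from ne_of_gt hlt1),
        and_false, if_false, add_zero]
      split <;> omega
    · simp only [eq_self_iff_true, and_true, (show ¬((β:ℝ)^(n+1) = β^n) from ne_of_lt hlt1),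
        and_false, if_false, zero_add]
      split <;> omega

open Classical in
lemma pcnt_lt_bounds (x : ℝ) :
    ∀ (l : List ℝ), (∀ y ∈ l, 0 < y) → ∀ (o : ℝ),
    pcnt (fun o' h => o' + h ≤ x) l o ≤ pcnt (fun o' _ => o' < x) l o
      ∧ pcnt (fun o' _ => o' < x) l o
        ≤ pcnt (fun o' h => o' + h ≤ x) l o + (if o < x then 1 else 0) := by
  intro l
  induction l with
  | nil => simp
  | cons a t ih =>
    intro hl o
    have ha : 0 < a := hl a (by simp)
    obtain ⟨ih1, ih2⟩ := ih (fun y hy => hl y (List.mem_cons_of_mem _ hy)) (o + a)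
    simp only [pcnt_cons]
    have hif : (if o + a < x then 1 else 0) ≤ (if o < x then 1 else 0) := by
      split
      · rw [if_pos (by linarith)]
      · split <;> omega
    by_cases hoa : o + a ≤ x
    · have ho : o < x := by linarith
      rw [if_pos ho] at hif
      rw [if_pos hoa, if_pos ho]
      constructor <;> omega
    · rw [if_neg hoa]
      have hnoa : ¬(o + a < x) := fun hh => hoa (le_of_lt hh)
      rw [if_neg hnoa] at ih2 hif
      constructor <;> [omega; (split at hif <;> omega)]

open Classical in
lemma plen_split (n : ℕ) (x : ℝ) (hβ0 : 0 < β) (hβ1 : β < 1) :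
    ∀ (l : List ℝ), (∀ y ∈ l, y = β ^ n ∨ y = β ^ (n + 1)) → ∀ (o : ℝ),
    plen x l o = β^n * pcnt (fun o' h => o' + h ≤ x ∧ h = β^n) l o
      + β^(n+1) * pcnt (fun o' h => o' + h ≤ x ∧ h = β^(n+1)) l o := by
  have hlt1 : β ^ (n+1) < β ^ n := pow_lt_pow_right_of_lt_one₀ hβ0 hβ1 (Nat.lt_succ_self n)
  intro l
  induction l with
  | nil => simp
  | cons a t ih =>
    intro hl o
    have iht := ih (fun y hy => hl y (List.mem_cons_of_mem _ hy)) (o + a)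
    simp only [pcnt_cons, plen_cons, iht]
    rcases hl a (by simp) with h | h <;> subst h
    · simp only [eq_self_iff_true, and_true, (show ¬((β:ℝ)^n = β^(n+1)) from ne_of_gt hlt1),
        and_false, if_false, add_zero]
      split <;> push_cast <;> ring
    · simp only [eq_self_iff_true, and_true, (show ¬((β:ℝ)^(n+1) = β^n) from ne_of_lt hlt1),
        and_false, if_false, zero_add]
      split <;> push_cast <;> ring

open Classical in
lemma plen_nonneg (x : ℝ) : ∀ (l : List ℝ), (∀ y ∈ l, 0 ≤ y) → ∀ (o : ℝ),
    0 ≤ plen x l o := by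
  intro l
  induction l with
  | nil => intro _ o; simp
  | cons a t ih =>
    intro hl o
    have iht := ih (fun y hy => hl y (List.mem_cons_of_mem _ hy)) (o + a)
    rw [plen_cons]
    have := hl a (by simp)
    split <;> linarith

open Classical in
lemma plen_le (x : ℝ) : ∀ (l : List ℝ), (∀ y ∈ l, 0 < y) → ∀ (o : ℝ),
    plen x l o ≤ max (x - o) 0 := by
  intro l
  induction l with
  | nil => intro _ o; simp [le_max_iff]
  | cons a t ih =>
    intro hl o
    have ha : 0 < a := hl a (by simp)
    have iht := ih (fun y hy => hl y (List.mem_cons_of_mem _ hy)) (o + a)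
    rw [plen_cons]
    by_cases hoa : o + a ≤ x
    · rw [if_pos hoa]
      calc a + plen x t (o + a) ≤ a + max (x - (o + a)) 0 := by linarith
        _ ≤ x - o := by
          have : max (x - (o + a)) 0 ≤ x - o - a := max_le (by linarith) (by linarith)
          linarith
        _ ≤ max (x - o) 0 := le_max_left _ _
    · rw [if_neg hoa, zero_add]
      exact iht.trans (max_le_max (by linarith) le_rfl)

open Classical in
lemma plen_ge (x M : ℝ) (hM : 0 < M) : ∀ (l : List ℝ),
    (∀ y ∈ l, 0 < y ∧ y ≤ M) → ∀ (o : ℝ),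
    min x (o + l.sum) - o - M ≤ plen x l o := by
  intro l
  induction l with
  | nil =>
    intro _ o
    simp only [List.sum_nil, add_zero, plen_nil]
    have : min x o ≤ o := min_le_right _ _
    linarith
  | cons a t ih =>
    intro hl o
    obtain ⟨ha, haM⟩ := hl a (by simp)
    have iht := ih (fun y hy => hl y (List.mem_cons_of_mem _ hy)) (o + a)
    have hsumt : (0:ℝ) ≤ t.sum :=
      List.sum_nonneg (fun y hy => le_of_lt (hl y (List.mem_cons_of_mem _ hy)).1)
    rw [plen_cons, List.sum_cons]
    by_cases hoa : o + a ≤ x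
    · rw [if_pos hoa]
      have he : min x (o + (a + t.sum)) = min x (o + a + t.sum) := by ring_nf
      rw [he]
      linarith
    · rw [if_neg hoa, zero_add]
      push_neg at hoa
      have hplen : 0 ≤ plen x t (o + a) :=
        plen_nonneg x t (fun y hy => le_of_lt (hl y (List.mem_cons_of_mem _ hy)).1) (o + a)
      have : min x (o + (a + t.sum)) ≤ x := min_le_left _ _
      linarith

end LS3

set_option maxHeartbeats 1000000 in
lemma key_est {L S : ℕ} {β : ℝ} (hL : 0 < L) (hS : 0 < S) (hβ0 : 0 < β) (hβ1 : β < 1)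
    (hβ : (L:ℝ)*β + S*β^2 = 1) (c : ℝ) (p q : ℕ → ℝ)
    (hp01 : 0 ≤ p 0 ∧ p 0 ≤ 1) (hq01 : 0 ≤ q 0 ∧ q 0 ≤ 1)
    (hp1 : ∀ n, (L:ℝ)*(p n) + q n ≤ p (n+1)) (hp2 : ∀ n, p (n+1) ≤ (L:ℝ)*(p n) + q n + L)
    (hq1 : ∀ n, (S:ℝ)*(p n) ≤ q (n+1)) (hq2 : ∀ n, q (n+1) ≤ (S:ℝ)*(p n) + S)
    (hu : ∀ n, |β^n * p n + β^(n+1) * q n - c| ≤ β^n) :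
    ∀ n, |(1 + S*β^2) * ((p n + q n) * β^n) - c*(1 + S*β)|
      ≤ (1 + S*β)*β^n
        + (1 + S*β^2)*((1 + S*β) + (S + (S*β)*L)*n) * (max (S*β^2) β)^n := by
  have hSβ : (0:ℝ) < S*β := by positivity
  have hμ : (0:ℝ) < S*β^2 := by positivity
  have hLβ : (0:ℝ) < L*β := by positivity
  have hμ1 : S*β^2 < 1 := by nlinarith
  have hQβ : β ≤ max (S*β^2) β := le_max_right _ _
  have hQμ : S*β^2 ≤ max (S*β^2) β := le_max_left _ _
  have hQ0 : (0:ℝ) < max (S*β^2) β := lt_of_lt_of_le hβ0 hQβ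
  have hid : ((S:ℝ)*β)^2 + L*(S*β) = S := by linear_combination (S:ℝ) * hβ
  set g : ℕ → ℝ := fun n => q n - (S*β) * p n with hgdef
  have hS' : (0:ℝ) ≤ S := le_of_lt (by exact_mod_cast hS)
  have hSβL : (0:ℝ) ≤ (S*β) * L := by positivity
  have hg : ∀ n, |g (n+1) + (S*β) * g n| ≤ S + (S*β) * L := by
    intro n
    have m1 := mul_le_mul_of_nonneg_left (hp1 n) (le_of_lt hSβ)
    have m2 := mul_le_mul_of_nonneg_left (hp2 n) (le_of_lt hSβ)
    have hcancel : ((S:ℝ)*β)^2 * p n + (L:ℝ)*(S*β)*(p n) = (S:ℝ) * p n := by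
      linear_combination (p n) * hid
    rw [abs_le]
    constructor
    · simp only [hgdef]; nlinarith [hq1 n, m2, hcancel]
    · simp only [hgdef]; nlinarith [hq2 n, m1, hcancel]
  have hgstep : ∀ n, |g (n+1)| ≤ (S*β) * |g n| + (S + (S*β)*L) := by
    intro n
    have habs : |g (n+1)| ≤ |g (n+1) + (S*β) * g n| + |(S*β) * g n| := by
      have h := abs_add_le (g (n+1) + (S*β) * g n) (-((S*β) * g n))
      simpa using h
    calc |g (n+1)| ≤ |g (n+1) + (S*β) * g n| + |(S*β) * g n| := habs
      _ ≤ (S + (S*β)*L) + (S*β) * |g n| := by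
          rw [abs_mul, abs_of_nonneg (le_of_lt hSβ)]
          linarith [hg n]
      _ = (S*β) * |g n| + (S + (S*β)*L) := by ring
  have hh : ∀ n, |g n * β^n| ≤ ((1 + S*β) + (S + (S*β)*L)*n) * (max (S*β^2) β)^n := by
    intro n
    induction n with
    | zero =>
      simp only [pow_zero, mul_one, Nat.cast_zero, mul_zero, add_zero]
      rw [abs_le]
      have h1 : (S*β) * p 0 ≤ S*β := by nlinarith [hp01.1, hp01.2]
      have h2 : (0:ℝ) ≤ (S*β) * p 0 := mul_nonneg (le_of_lt hSβ) hp01.1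
      constructor
      · simp only [hgdef]; nlinarith [hq01.1, hq01.2]
      · simp only [hgdef]; nlinarith [hq01.1, hq01.2]
    | succ n ih =>
      have hcast : ((n+1 : ℕ):ℝ) = (n:ℝ)+1 := by push_cast; ring
      rw [hcast]
      have hβn1 : β^(n+1) ≤ (max (S*β^2) β)^(n+1) :=
        pow_le_pow_left₀ (le_of_lt hβ0) hQβ (n+1)
      have hgn : 0 ≤ |g n| := abs_nonneg _
      calc |g (n+1) * β^(n+1)| = |g (n+1)| * β^(n+1) := by
            rw [abs_mul, abs_of_nonneg (by positivity : (0:ℝ) ≤ β^(n+1))]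
        _ ≤ ((S*β) * |g n| + (S + (S*β)*L)) * β^(n+1) := by
            apply mul_le_mul_of_nonneg_right (hgstep n) (by positivity)
        _ = (S*β^2) * (|g n| * β^n) + (S + (S*β)*L) * β^(n+1) := by ring
        _ ≤ (max (S*β^2) β) * (((1 + S*β) + (S + (S*β)*L)*n) * (max (S*β^2) β)^n)
            + (S + (S*β)*L) * (max (S*β^2) β)^(n+1) := by
            have t1 : (S*β^2) * (|g n| * β^n) ≤ (max (S*β^2) β) * (|g n| * β^n) := by
              apply mul_le_mul_of_nonneg_right hQμ (by positivity)
            have t2 : (max (S*β^2) β) * (|g n| * β^n)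
                ≤ (max (S*β^2) β) * (((1 + S*β) + (S + (S*β)*L)*n) * (max (S*β^2) β)^n) := by
              apply mul_le_mul_of_nonneg_left ?_ (le_of_lt hQ0)
              calc |g n| * β^n = |g n * β^n| := by
                    rw [abs_mul, abs_of_nonneg (by positivity : (0:ℝ) ≤ β^n)]
                _ ≤ _ := ih
            have t3 : (S + (S*β)*L) * β^(n+1) ≤ (S + (S*β)*L) * (max (S*β^2) β)^(n+1) := by
              apply mul_le_mul_of_nonneg_left hβn1 (by positivity)
            linarith
        _ = ((1 + S*β) + (S + (S*β)*L)*((n:ℝ)+1)) * (max (S*β^2) β)^(n+1) := by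
            push_cast; ring
  intro n
  have hun := hu n
  have hhn := hh n
  have hidd : (1 + S*β^2) * ((p n + q n) * β^n) - c*(1 + S*β)
      = (1 + S*β)*((β^n * p n + β^(n+1) * q n) - c)
        + ((1 - β))*(g n * β^n) := by
    simp only [hgdef]; ring
  rw [hidd]
  calc |(1 + S*β)*((β^n * p n + β^(n+1) * q n) - c) + (1 - β)*(g n * β^n)|
      ≤ |(1 + S*β)*((β^n * p n + β^(n+1) * q n) - c)| + |(1 - β)*(g n * β^n)| := abs_add_le _ _
    _ ≤ (1 + S*β)*β^n + 1*(((1 + S*β) + (S + (S*β)*L)*n) * (max (S*β^2) β)^n) := by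
        have a1 : |(1 + S*β)*((β^n * p n + β^(n+1) * q n) - c)| ≤ (1 + S*β)*β^n := by
          rw [abs_mul, abs_of_nonneg (by positivity : (0:ℝ) ≤ 1 + S*β)]
          apply mul_le_mul_of_nonneg_left hun (by positivity)
        have a2 : |(1 - β)*(g n * β^n)|
            ≤ 1*(((1 + S*β) + (S + (S*β)*L)*n) * (max (S*β^2) β)^n) := by
          rw [abs_mul]
          apply mul_le_mul (by rw [abs_of_nonneg (by linarith)]; linarith) hhn (abs_nonneg _)
            (by norm_num)
        linarith
    _ ≤ (1 + S*β)*β^n + (1 + S*β^2)*((1 + S*β) + (S + (S*β)*L)*n) * (max (S*β^2) β)^n := by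
        have hX : (0:ℝ) ≤ ((1 + S*β) + (S + (S*β)*L)*n) * (max (S*β^2) β)^n := by positivity
        have h9 := mul_le_mul_of_nonneg_right
          (show (1:ℝ) ≤ 1 + S*β^2 by linarith) hX
        linarith

open Classical in
lemma plen_all (x : ℝ) : ∀ (l : List ℝ), (∀ y ∈ l, 0 ≤ y) → ∀ (o : ℝ),
    o + l.sum ≤ x → plen x l o = l.sum := by
  intro l
  induction l with
  | nil => intro _ o _; simp
  | cons a t ih =>
    intro hl o hox
    rw [List.sum_cons] at hox ⊢
    have ha : 0 ≤ a := hl a (by simp)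
    have hst : (0:ℝ) ≤ t.sum :=
      List.sum_nonneg (fun y hy => hl y (List.mem_cons_of_mem _ hy))
    rw [plen_cons, if_pos (by linarith),
      ih (fun y hy => hl y (List.mem_cons_of_mem _ hy)) (o + a) (by linarith)]

open Classical in
lemma pcnt_all (x : ℝ) : ∀ (l : List ℝ), (∀ y ∈ l, 0 ≤ y) → ∀ (o : ℝ),
    o + l.sum ≤ x → pcnt (fun o' h => o' + h ≤ x) l o = l.length := by
  intro l
  induction l with
  | nil => intro _ o _; simp
  | cons a t ih =>
    intro hl o hox
    rw [List.sum_cons] at hox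
    have ha : 0 ≤ a := hl a (by simp)
    have hst : (0:ℝ) ≤ t.sum :=
      List.sum_nonneg (fun y hy => hl y (List.mem_cons_of_mem _ hy))
    rw [pcnt_cons, if_pos (by linarith : o + a ≤ x),
      ih (fun y hy => hl y (List.mem_cons_of_mem _ hy)) (o + a) (by linarith)]
    simp [List.length_cons]
    omega

open Classical in
lemma pcnt_interval (a b : ℝ) (hab : a ≤ b) : ∀ (l : List ℝ) (o : ℝ),
    pcnt (fun o' _ => a ≤ o' ∧ o' < b) l o + pcnt (fun o' _ => o' < a) l o
      = pcnt (fun o' _ => o' < b) l o := by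
  intro l
  induction l with
  | nil => simp
  | cons h t ih =>
    intro o
    simp only [pcnt_cons]
    have iht := ih (o + h)
    by_cases h1 : o < a
    · rw [if_neg (by rintro ⟨h2, -⟩; exact absurd h1 (not_lt.mpr h2)), if_pos h1,
        if_pos (lt_of_lt_of_le h1 hab)]
      omega
    · rw [if_neg h1]
      by_cases h2 : o < b
      · rw [if_pos ⟨le_of_not_gt h1, h2⟩, if_pos h2]
        omega
      · rw [if_neg (by rintro ⟨-, h3⟩; exact h2 h3), if_neg h2]
        omega

section Assemble

variable {L S : ℕ} {β : ℝ}

open Classical in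
lemma LS_est (hL : 0 < L) (hS : 0 < S) (hβ0 : 0 < β) (hβ1 : β < 1)
    (hβ : (L:ℝ)*β + (S:ℝ)*β^2 = 1) (z c : ℝ)
    (hu : ∀ k, |plen z (LSpart L S β k) 0 - c| ≤ β^k) (n : ℕ) :
    |(1 + S*β^2) * ((((pcnt (fun o h => o + h ≤ z ∧ h = β^n) (LSpart L S β n) 0 : ℕ) : ℝ)
        + ((pcnt (fun o h => o + h ≤ z ∧ h = β^(n+1)) (LSpart L S β n) 0 : ℕ) : ℝ)) * β^n)
      - c*(1 + S*β)|
    ≤ (1 + S*β)*β^n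
      + (1 + S*β^2)*((1 + S*β) + (S + (S*β)*L)*n) * (max (S*β^2) β)^n := by
  have hlen0 : (LSpart L S β 0).length = 1 := by rw [LSpart]; rfl
  apply key_est hL hS hβ0 hβ1 hβ c
    (fun k => ((pcnt (fun o h => o + h ≤ z ∧ h = β^k) (LSpart L S β k) 0 : ℕ) : ℝ))
    (fun k => ((pcnt (fun o h => o + h ≤ z ∧ h = β^(k+1)) (LSpart L S β k) 0 : ℕ) : ℝ))
  · constructor
    · positivity
    · have := pcnt_le_length (fun o h => o + h ≤ z ∧ h = β^0) (LSpart L S β 0) 0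
      rw [hlen0] at this
      exact_mod_cast this
  · constructor
    · positivity
    · have := pcnt_le_length (fun o h => o + h ≤ z ∧ h = β^(0+1)) (LSpart L S β 0) 0
      rw [hlen0] at this
      exact_mod_cast this
  · intro k
    obtain ⟨⟨r1, -⟩, -, -⟩ :=
      rec_step hL hS hβ0 hβ1 hβ k z (LSpart L S β k) (mem_LSpart hL hβ0 hβ1 k) 0
    rw [← LSpart_succ_eq] at r1
    exact_mod_cast r1
  · intro k
    obtain ⟨⟨-, r2⟩, -, -⟩ :=
      rec_step hL hS hβ0 hβ1 hβ k z (LSpart L S β k) (mem_LSpart hL hβ0 hβ1 k) 0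
    rw [← LSpart_succ_eq] at r2
    have hif : (if (0:ℝ) < z then L else 0) ≤ L := by split <;> omega
    have : pcnt (fun o h => o + h ≤ z ∧ h = β^(k+1)) (LSpart L S β (k+1)) 0
        ≤ L * pcnt (fun o h => o + h ≤ z ∧ h = β^k) (LSpart L S β k) 0
          + pcnt (fun o h => o + h ≤ z ∧ h = β^(k+1)) (LSpart L S β k) 0 + L := by omega
    exact_mod_cast this
  · intro k
    obtain ⟨-, r3, -⟩ :=
      rec_step hL hS hβ0 hβ1 hβ k z (LSpart L S β k) (mem_LSpart hL hβ0 hβ1 k) 0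
    rw [← LSpart_succ_eq] at r3
    exact_mod_cast r3
  · intro k
    obtain ⟨-, -, r4⟩ :=
      rec_step hL hS hβ0 hβ1 hβ k z (LSpart L S β k) (mem_LSpart hL hβ0 hβ1 k) 0
    rw [← LSpart_succ_eq] at r4
    have hif : (if (0:ℝ) < z then S else 0) ≤ S := by split <;> omega
    have : pcnt (fun o h => o + h ≤ z ∧ h = β^(k+2)) (LSpart L S β (k+1)) 0
        ≤ S * pcnt (fun o h => o + h ≤ z ∧ h = β^k) (LSpart L S β k) 0 + S := by omega
    exact_mod_cast this
  · intro k
    have hsplit := plen_split k z hβ0 hβ1 (LSpart L S β k) (mem_LSpart hL hβ0 hβ1 k) 0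
    rw [← hsplit]
    exact hu k

end Assemble

section Assemble2

variable {L S : ℕ} {β : ℝ}

set_option maxHeartbeats 1000000 in
open Classical in
lemma N_bound (hL : 0 < L) (hS : 0 < S) (hβ0 : 0 < β) (hβ1 : β < 1)
    (hβ : (L:ℝ)*β + (S:ℝ)*β^2 = 1) (x : ℝ) (hx0 : 0 ≤ x) (hx1 : x ≤ 1) (n : ℕ) :
    |((pcnt (fun o' _ => o' < x) (LSpart L S β n) 0 : ℕ) : ℝ)
        / (((LSpart L S β n).length : ℕ) : ℝ) - x|
      ≤ β^n + 2*((1 + S*β)*β^n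
        + (1 + S*β^2)*((1 + S*β) + (S + (S*β)*L)*n) * (max (S*β^2) β)^n) := by
  have hβn : (0:ℝ) < β^n := by positivity
  have hβn1 : β^(n+1) ≤ β^n :=
    le_of_lt (pow_lt_pow_right_of_lt_one₀ hβ0 hβ1 (Nat.lt_succ_self n))
  have hmem := mem_LSpart (S := S) hL hβ0 hβ1 n
  have hpos := pos_of_mem_LSpart (S := S) hL hβ0 hβ1 n
  have hsum : (LSpart L S β n).sum = 1 := sum_LSpart hL hβ0 hβ1 hβ n
  -- `hu` for `z = x , c = x`
  have hux : ∀ k, |plen x (LSpart L S β k) 0 - x| ≤ β^k := by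
    intro k
    have hk0 : (0:ℝ) < β^k := by positivity
    have hle := plen_le x (LSpart L S β k) (pos_of_mem_LSpart hL hβ0 hβ1 k) 0
    rw [sub_zero, max_eq_left hx0] at hle
    have hge := plen_ge x (β^k) hk0 (LSpart L S β k)
      (fun y hy => ⟨pos_of_mem_LSpart hL hβ0 hβ1 k y hy, LSpart_le hL hβ0 hβ1 k y hy⟩) 0
    rw [sum_LSpart hL hβ0 hβ1 hβ k, zero_add, min_eq_left hx1] at hge
    rw [abs_le]
    constructor <;> linarith
  -- `hu` for `z = 2 , c = 1`
  have hu2 : ∀ k, |plen 2 (LSpart L S β k) 0 - 1| ≤ β^k := by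
    intro k
    have : plen 2 (LSpart L S β k) 0 = (LSpart L S β k).sum :=
      plen_all 2 (LSpart L S β k)
        (fun y hy => le_of_lt (pos_of_mem_LSpart hL hβ0 hβ1 k y hy)) 0
        (by rw [sum_LSpart hL hβ0 hβ1 hβ k]; norm_num)
    rw [this, sum_LSpart hL hβ0 hβ1 hβ k]
    simp
    positivity
  have est1 := LS_est hL hS hβ0 hβ1 hβ x x hux n
  have est2 := LS_est hL hS hβ0 hβ1 hβ 2 1 hu2 n
  -- abbreviations
  set pA := pcnt (fun o h => o + h ≤ x ∧ h = β^n) (LSpart L S β n) 0 with hpA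
  set qA := pcnt (fun o h => o + h ≤ x ∧ h = β^(n+1)) (LSpart L S β n) 0 with hqA
  set p2 := pcnt (fun o h => o + h ≤ 2 ∧ h = β^n) (LSpart L S β n) 0 with hp2
  set q2 := pcnt (fun o h => o + h ≤ 2 ∧ h = β^(n+1)) (LSpart L S β n) 0 with hq2
  set Nn := pcnt (fun o' _ => o' < x) (LSpart L S β n) 0 with hNn
  set R := (1 + (S:ℝ)*β)*β^n
      + (1 + S*β^2)*((1 + S*β) + (S + (S*β)*L)*n) * (max (S*β^2) β)^n with hR
  have hR0 : 0 ≤ R := by rw [hR]; positivity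
  -- `p2 + q2` is the total number of intervals
  have htot : p2 + q2 = (LSpart L S β n).length := by
    rw [hp2, hq2, pcnt_split n 2 hβ0 hβ1 (LSpart L S β n) hmem 0]
    exact pcnt_all 2 (LSpart L S β n) (fun y hy => le_of_lt (hpos y hy)) 0
      (by rw [hsum]; norm_num)
  -- the total length identity
  have hplen2 : β^n * p2 + β^(n+1) * q2 = 1 := by
    have := plen_split n 2 hβ0 hβ1 (LSpart L S β n) hmem 0
    rw [plen_all 2 (LSpart L S β n) (fun y hy => le_of_lt (hpos y hy)) 0
      (by rw [hsum]; norm_num), hsum] at this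
    rw [← this]
  have hT1 : 1 ≤ (((LSpart L S β n).length : ℕ) : ℝ) * β^n := by
    have hcast : (((LSpart L S β n).length : ℕ) : ℝ) = (p2 : ℝ) + (q2 : ℝ) := by
      rw [← htot]; push_cast; ring
    rw [hcast]
    have hq2' : (0:ℝ) ≤ q2 := by positivity
    nlinarith [hplen2]
  have hTpos : (0:ℝ) < (((LSpart L S β n).length : ℕ) : ℝ) * β^n := by linarith
  have hT0 : (0:ℝ) < (((LSpart L S β n).length : ℕ) : ℝ) := by
    by_contra hc
    push_neg at hc
    nlinarith
  -- `Nn` is between `pA + qA` and `pA + qA + 1`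
  have hNb : pA + qA ≤ Nn ∧ Nn ≤ pA + qA + 1 := by
    have hsplit := pcnt_split n x hβ0 hβ1 (LSpart L S β n) hmem 0
    obtain ⟨b1, b2⟩ := pcnt_lt_bounds x (LSpart L S β n) hpos 0
    have hif : (if (0:ℝ) < x then 1 else 0) ≤ 1 := by split <;> omega
    constructor
    · rw [hpA, hqA, hsplit]; exact b1
    · rw [hpA, hqA, hsplit]; omega
  -- key bound : |A βⁿ - x T βⁿ| ≤ 2R
  set T := (((LSpart L S β n).length : ℕ) : ℝ) with hT
  have hTtot : T = (p2 : ℝ) + (q2 : ℝ) := by rw [hT, ← htot]; push_cast; ring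
  have hμ0 : (0:ℝ) ≤ (S:ℝ)*β^2 := by positivity
  have key1 : |((pA:ℝ) + qA) * β^n - x * (T * β^n)| ≤ 2*R := by
    have e3 : (1 + (S:ℝ)*β^2)*(((pA:ℝ) + qA) * β^n - x * (T * β^n))
        = ((1 + S*β^2) * (((pA:ℝ) + (qA:ℝ)) * β^n) - x*(1 + S*β))
          - x*((1 + S*β^2) * (((p2:ℝ) + (q2:ℝ)) * β^n) - 1*(1 + S*β)) := by
      rw [hTtot]; ring
    have habs : (1 + (S:ℝ)*β^2) * |((pA:ℝ) + qA) * β^n - x * (T * β^n)| ≤ 2*R := by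
      rw [← abs_of_nonneg (by linarith : (0:ℝ) ≤ 1 + (S:ℝ)*β^2), ← abs_mul, e3]
      have hxabs : |x| ≤ 1 := by rw [abs_of_nonneg hx0]; exact hx1
      calc |((1 + S*β^2) * (((pA:ℝ) + (qA:ℝ)) * β^n) - x*(1 + S*β))
            - x*((1 + S*β^2) * (((p2:ℝ) + (q2:ℝ)) * β^n) - 1*(1 + S*β))|
          ≤ |(1 + S*β^2) * (((pA:ℝ) + (qA:ℝ)) * β^n) - x*(1 + S*β)|
            + |x| * |(1 + S*β^2) * (((p2:ℝ) + (q2:ℝ)) * β^n) - 1*(1 + S*β)| := by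
            rw [← abs_mul]
            exact abs_sub _ _
        _ ≤ R + 1 * R := by
            have := mul_le_mul hxabs est2 (abs_nonneg _) (by norm_num : (0:ℝ) ≤ 1)
            rw [hR]
            refine add_le_add ?_ ?_
            · exact est1
            · calc |x| * |(1 + (S:ℝ)*β^2) * (((p2:ℝ) + (q2:ℝ)) * β^n) - 1*(1 + S*β)|
                  ≤ 1 * ((1 + (S:ℝ)*β)*β^n + (1 + S*β^2)*((1 + S*β) + (S + (S*β)*L)*n)
                      * (max (S*β^2) β)^n) := this
                _ = _ := by ring
        _ = 2*R := by ring
    calc |((pA:ℝ) + qA) * β^n - x * (T * β^n)|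
        ≤ (1 + (S:ℝ)*β^2) * |((pA:ℝ) + qA) * β^n - x * (T * β^n)| :=
          le_mul_of_one_le_left (abs_nonneg _) (by linarith)
      _ ≤ 2*R := habs
  -- final assembly
  have heq : ((Nn:ℕ):ℝ) / T - x = (((Nn:ℕ):ℝ) * β^n - x * (T * β^n)) / (T * β^n) := by
    field_simp
  rw [heq, abs_div, abs_of_pos hTpos]
  have hnum : |((Nn:ℕ):ℝ) * β^n - x * (T * β^n)| ≤ β^n + 2*R := by
    have hNA : |((Nn:ℕ):ℝ) * β^n - ((pA:ℝ) + qA) * β^n| ≤ β^n := by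
      have c1 : ((pA:ℝ) + qA) ≤ (Nn:ℝ) := by exact_mod_cast hNb.1
      have c2 : ((Nn:ℕ):ℝ) ≤ (pA:ℝ) + qA + 1 := by exact_mod_cast hNb.2
      rw [abs_le]
      constructor <;> nlinarith
    calc |((Nn:ℕ):ℝ) * β^n - x * (T * β^n)|
        ≤ |((Nn:ℕ):ℝ) * β^n - ((pA:ℝ) + qA) * β^n|
          + |((pA:ℝ) + qA) * β^n - x * (T * β^n)| := by
          have := abs_add_le (((Nn:ℕ):ℝ) * β^n - ((pA:ℝ) + qA) * β^n)
            (((pA:ℝ) + qA) * β^n - x * (T * β^n))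
          calc |((Nn:ℕ):ℝ) * β^n - x * (T * β^n)|
              = |(((Nn:ℕ):ℝ) * β^n - ((pA:ℝ) + qA) * β^n)
                + (((pA:ℝ) + qA) * β^n - x * (T * β^n))| := by ring_nf
            _ ≤ _ := this
      _ ≤ β^n + 2*R := add_le_add hNA key1
  have hdiv : |((Nn:ℕ):ℝ) * β^n - x * (T * β^n)| / (T * β^n)
      ≤ |((Nn:ℕ):ℝ) * β^n - x * (T * β^n)| := by
    rw [div_le_iff₀ hTpos]
    exact le_mul_of_one_le_right (abs_nonneg _) hT1
  linarith

end Assemble2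

/-- The discrepancy of the LS-sequence of partitions tends to `0`; i.e. `{ρⁿ}` is
uniformly distributed. -/
theorem disc_tendsto_zero (L S : ℕ) (hL : 0 < L) (hS : 0 < S)
    (β : ℝ) (hβ0 : 0 < β) (hβ1 : β < 1)
    (hβ : (L : ℝ) * β + (S : ℝ) * β ^ 2 = 1) :
    Tendsto (fun n : ℕ => disc L S β n) atTop (nhds 0) := by
  have hμ1 : (S:ℝ)*β^2 < 1 := by
    have : (0:ℝ) < L*β := by positivity
    nlinarith
  set E : ℕ → ℝ := fun n => β^n + 2*((1 + S*β)*β^n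
    + (1 + S*β^2)*((1 + S*β) + (S + (S*β)*L)*n) * (max (S*β^2) β)^n) with hE
  have hEnonneg : ∀ n, 0 ≤ E n := by
    intro n
    rw [hE]
    have h1 : (0:ℝ) ≤ β^n := by positivity
    have h2 : (0:ℝ) ≤ (1 + S*β^2)*((1 + S*β) + (S + (S*β)*L)*n) * (max (S*β^2) β)^n := by
      have : (0:ℝ) < max (S*β^2) β := lt_of_lt_of_le hβ0 (le_max_right _ _)
      positivity
    have h3 : (0:ℝ) ≤ (1 + S*β)*β^n := by positivity
    simp only []
    linarith
  have hdisc_ge : ∀ n, 0 ≤ disc L S β n := by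
    intro n
    apply Real.sSup_nonneg
    rintro y ⟨a, b, -, -, -, rfl⟩
    exact abs_nonneg _
  have hdisc_le : ∀ n, disc L S β n ≤ 2 * E n := by
    intro n
    apply Real.sSup_le
    · rintro y ⟨a, b, ha0, hab, hb1, rfl⟩
      have hb0 : 0 ≤ b := le_of_lt (lt_of_le_of_lt ha0 hab)
      have ha1 : a ≤ 1 := le_of_lt (lt_of_lt_of_le hab hb1)
      have hlenpos : 0 < (LSpart L S β n).length :=
        List.length_pos_iff.mpr (LSpart_ne_nil hL hβ0 hβ1 hβ n)
      have hT0 : (0:ℝ) < ((LSpart L S β n).length : ℝ) := by exact_mod_cast hlenpos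
      have hncard : ({j : Fin (LSpart L S β n).length |
          a ≤ lep L S β n ↑j ∧ lep L S β n ↑j < b}).ncard
          = pcnt (fun o' _ => a ≤ o' ∧ o' < b) (LSpart L S β n) 0 :=
        ncard_pcnt (fun y => a ≤ y ∧ y < b) (LSpart L S β n)
      have hint := pcnt_interval a b (le_of_lt hab) (LSpart L S β n) 0
      have hA := N_bound hL hS hβ0 hβ1 hβ a ha0 ha1 n
      have hB := N_bound hL hS hβ0 hβ1 hβ b hb0 hb1 n
      rw [hncard]
      set Na := pcnt (fun o' _ => o' < a) (LSpart L S β n) 0 with hNa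
      set Nb := pcnt (fun o' _ => o' < b) (LSpart L S β n) 0 with hNb
      set cnt := pcnt (fun o' _ => a ≤ o' ∧ o' < b) (LSpart L S β n) 0 with hcnt
      set T := ((LSpart L S β n).length : ℝ) with hT
      have hcntR : (cnt:ℝ) = (Nb:ℝ) - (Na:ℝ) := by
        have : (cnt:ℝ) + (Na:ℝ) = (Nb:ℝ) := by exact_mod_cast hint
        linarith
      have hsplit : (cnt:ℝ)/T - (b - a) = ((Nb:ℝ)/T - b) - ((Na:ℝ)/T - a) := by
        rw [hcntR]
        field_simp
        ring
      rw [hsplit]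
      calc |((Nb:ℝ)/T - b) - ((Na:ℝ)/T - a)|
          ≤ |(Nb:ℝ)/T - b| + |(Na:ℝ)/T - a| := abs_sub _ _
        _ ≤ E n + E n := add_le_add hB hA
        _ = 2 * E n := by ring
    · linarith [hEnonneg n]
  have hQ1 : max ((S:ℝ)*β^2) β < 1 := max_lt hμ1 hβ1
  have hQ0 : (0:ℝ) ≤ max ((S:ℝ)*β^2) β := le_of_lt (lt_of_lt_of_le hβ0 (le_max_right _ _))
  have t1 : Tendsto (fun n : ℕ => β^n) atTop (nhds 0) :=
    tendsto_pow_atTop_nhds_zero_of_lt_one (le_of_lt hβ0) hβ1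
  have t2 : Tendsto (fun n : ℕ => (max ((S:ℝ)*β^2) β)^n) atTop (nhds 0) :=
    tendsto_pow_atTop_nhds_zero_of_lt_one hQ0 hQ1
  have t3 : Tendsto (fun n : ℕ => (n:ℝ) * (max ((S:ℝ)*β^2) β)^n) atTop (nhds 0) :=
    tendsto_self_mul_const_pow_of_lt_one hQ0 hQ1
  have hElim : Tendsto (fun n => 2 * E n) atTop (nhds 0) := by
    have heq : (fun n => 2 * E n) = fun n : ℕ =>
        (2 + 4*(1 + (S:ℝ)*β))*β^n + ((4*(1 + S*β^2)*(1 + S*β))*(max (S*β^2) β)^n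
          + (4*(1 + S*β^2)*(S + (S*β)*L))*((n:ℝ) * (max (S*β^2) β)^n)) := by
      funext n
      rw [hE]
      ring
    rw [heq]
    have := (t1.const_mul (2 + 4*(1 + (S:ℝ)*β))).add
      ((t2.const_mul (4*(1 + (S:ℝ)*β^2)*(1 + S*β))).add
        (t3.const_mul (4*(1 + (S:ℝ)*β^2)*((S:ℝ) + (S*β)*L))))
    simpa using this
  exact squeeze_zero hdisc_ge hdisc_le hElim
end

section
/- Fix positive integers L and S, let β ∈ (0,1) satisfy Lβ + Sβ² = 1, and let {ρⁿ} be the LS-sequence of partitions of [0,1). If S < L + 1, then the discrepancy D(ρⁿ) has the same order as 1/tₙ as n → ∞: there exist constants 0 < c ≤ C, depending only on L and S, such that c/tₙ ≤ D(ρⁿ) ≤ C/tₙ for all n ≥ 1. -/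
private def LSf (L S : ℕ) : Bool → List Bool
  | true => List.replicate L true ++ List.replicate S false
  | false => [true]

private def LSW (L S : ℕ) : ℕ → List Bool
  | 0 => [true]
  | n + 1 => (LSW L S n).flatMap (LSf L S)

private noncomputable def LSg (β : ℝ) (n : ℕ) : Bool → ℝ
  | true => β ^ n
  | false => β ^ (n + 1)

private noncomputable def LSmu (β : ℝ) (n : ℕ) (u : List Bool) : ℝ :=
  (u.map (LSg β n)).sum

open Classical in
private lemma LSpart_eq (L S : ℕ) (β : ℝ) (hβ0 : 0 < β) (hβ1 : β < 1) (n : ℕ) :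
    LSpart L S β n = (LSW L S n).map (LSg β n) := by
  induction n with
  | zero => simp [LSpart, LSW, LSg]
  | succ n ih =>
    rw [LSpart, ih, LSW, List.flatMap_map, List.map_flatMap]
    congr 1
    funext c
    cases c with
    | true =>
      simp only [LSg, if_pos rfl, LSf, List.map_append, List.map_replicate]
      norm_num [LSg]
    | false =>
      have hne : β ^ (n + 1) ≠ β ^ n := by
        have := pow_lt_pow_right_of_lt_one₀ hβ0 hβ1 (Nat.lt_succ_self n)
        exact ne_of_lt this
      simp [LSg, hne, LSf]

private lemma LSmu_nil (β : ℝ) (n : ℕ) : LSmu β n [] = 0 := rfl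

private lemma LSmu_append (β : ℝ) (n : ℕ) (u v : List Bool) :
    LSmu β n (u ++ v) = LSmu β n u + LSmu β n v := by
  simp [LSmu]

private lemma LSmu_flatMap (L S : ℕ) (β : ℝ)
    (hβ : (L : ℝ) * β + (S : ℝ) * β ^ 2 = 1) (n : ℕ) (u : List Bool) :
    LSmu β (n + 1) (u.flatMap (LSf L S)) = LSmu β n u := by
  induction u with
  | nil => simp [LSmu]
  | cons c u ih =>
    rw [List.flatMap_cons, LSmu_append, ih]
    cases c with
    | true =>
      have h1 : LSmu β (n+1) (LSf L S true) = β ^ n := by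
        simp only [LSf, LSmu, List.map_append, List.map_replicate, List.sum_append,
          List.sum_replicate, nsmul_eq_mul, LSg]
        have : (L : ℝ) * β ^ (n+1) + (S : ℝ) * β ^ (n+1+1) =
            β ^ n * ((L:ℝ) * β + (S:ℝ) * β ^ 2) := by ring
        rw [this, hβ, mul_one]
      rw [h1]
      simp [LSmu, LSg]
    | false =>
      simp [LSmu, LSg, LSf]

private lemma LSmu_len (L S : ℕ) (β : ℝ)
    (hβ : (L : ℝ) * β + (S : ℝ) * β ^ 2 = 1) (n : ℕ) (u : List Bool) :
    β ^ (n + 1) * (((u.flatMap (LSf L S)).length : ℝ) + (S : ℝ) * β * (u.length : ℝ))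
      = (1 + (S : ℝ) * β) * LSmu β n u := by
  induction u with
  | nil => simp [LSmu]
  | cons c u ih =>
    rw [List.flatMap_cons]
    have hcu : LSmu β n (c :: u) = LSmu β n [c] + LSmu β n u := by simp [LSmu]
    rw [hcu]
    cases c with
    | true =>
      have hlen : ((LSf L S true).length : ℝ) = (L : ℝ) + S := by simp [LSf]
      simp only [List.length_append, List.length_cons, Nat.cast_add, Nat.cast_succ]
      push_cast [hlen]
      rw [show LSmu β n [true] = β ^ n by simp [LSmu, LSg]]
      linear_combination ih + β ^ n * hβ
    | false =>
      simp only [List.length_append, List.length_cons, Nat.cast_add]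
      have hlen : ((LSf L S false).length : ℝ) = 1 := by simp [LSf]
      push_cast [hlen]
      rw [show LSmu β n [false] = β ^ (n+1) by simp [LSmu, LSg]]
      linear_combination ih

private lemma LSmu_total (L S : ℕ) (β : ℝ)
    (hβ : (L : ℝ) * β + (S : ℝ) * β ^ 2 = 1) (n : ℕ) :
    LSmu β n (LSW L S n) = 1 := by
  induction n with
  | zero => simp [LSW, LSmu, LSg]
  | succ n ih => rw [LSW, LSmu_flatMap L S β hβ, ih]

private lemma LSf_take (L S : ℕ) (hL : 0 < L) :
    ∀ (l : List Bool) (k : ℕ), k ≤ (l.flatMap (LSf L S)).length →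
      ∃ u p, u <+: l ∧ (l.flatMap (LSf L S)).take k = u.flatMap (LSf L S) ++ p ∧
        p.length ≤ L + S := by
  intro l
  induction l with
  | nil =>
    intro k hk
    refine ⟨[], [], List.prefix_refl _, ?_, by simp⟩
    simp at hk
    simp [hk]
  | cons c l ih =>
    intro k hk
    rw [List.flatMap_cons] at hk ⊢
    by_cases hkc : k ≤ (LSf L S c).length
    · refine ⟨[], (LSf L S c).take k, by simp, ?_, ?_⟩
      · rw [List.take_append, Nat.sub_eq_zero_of_le hkc]
        simp
      · have h1 : (LSf L S c).length ≤ L + S := by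
          cases c <;> simp [LSf] <;> omega
        calc ((LSf L S c).take k).length ≤ (LSf L S c).length :=
              by simpa using List.length_take_le k _
          _ ≤ L + S := h1
    · push_neg at hkc
      rw [List.length_append] at hk
      obtain ⟨u, p, hu, htake, hp⟩ := ih (k - (LSf L S c).length) (by omega)
      refine ⟨c :: u, p, List.cons_prefix_cons.mpr ⟨rfl, hu⟩, ?_, hp⟩
      rw [List.take_append, List.take_of_length_le (le_of_lt hkc),
        htake, List.flatMap_cons, List.append_assoc]

private lemma LSmu_nonneg (β : ℝ) (hβ0 : 0 < β) (n : ℕ) (u : List Bool) :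
    0 ≤ LSmu β n u := by
  apply List.sum_nonneg
  intro x hx
  obtain ⟨c, _, rfl⟩ := List.mem_map.mp hx
  cases c <;> simp [LSg] <;> positivity

private lemma LSmu_le (β : ℝ) (hβ0 : 0 < β) (hβ1 : β < 1) (n : ℕ) (u : List Bool) :
    LSmu β n u ≤ (u.length : ℝ) * β ^ n := by
  induction u with
  | nil => simp [LSmu]
  | cons c u ih =>
    have hcu : LSmu β n (c :: u) = LSg β n c + LSmu β n u := by simp [LSmu]
    rw [hcu]
    have hc : LSg β n c ≤ β ^ n := by
      cases c
      · simp only [LSg]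
        exact pow_le_pow_of_le_one (le_of_lt hβ0) (le_of_lt hβ1) (Nat.le_succ n)
      · simp [LSg]
    have : ((c :: u).length : ℝ) = (u.length : ℝ) + 1 := by push_cast [List.length_cons]; ring
    rw [this]
    nlinarith

private lemma main_delta (L S : ℕ) (hL : 0 < L) (hS : 0 < S) (hLS : S < L + 1)
    (β : ℝ) (hβ0 : 0 < β) (hβ1 : β < 1)
    (hβ : (L : ℝ) * β + (S : ℝ) * β ^ 2 = 1) :
    ∀ n, ∀ k ≤ (LSW L S n).length,
      |(k : ℝ) - ((LSW L S n).length : ℝ) * LSmu β n ((LSW L S n).take k)|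
        ≤ ((L + S : ℝ) * (2 + (S : ℝ) * β)) / (1 - (S : ℝ) * β) := by
  have hSL : (S : ℝ) ≤ L := by exact_mod_cast Nat.lt_succ_iff.mp hLS
  have hq1 : (S : ℝ) * β < 1 := by nlinarith [sq_nonneg β, hβ0]
  have hq0 : 0 ≤ (S : ℝ) * β := by positivity
  set q : ℝ := (S : ℝ) * β with hqdef
  set K : ℝ := ((L + S : ℝ) * (2 + q)) / (1 - q) with hKdef
  clear_value q
  clear_value K
  have hK0 : 0 ≤ K := by
    rw [hKdef]
    apply div_nonneg
    · have : (0:ℝ) ≤ (L+S:ℝ) := by positivity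
      nlinarith
    · linarith
  have hKq : (1 - q) * K = (L + S : ℝ) * (2 + q) := by
    have hne : (1:ℝ) - q ≠ 0 := by linarith
    rw [hKdef]
    field_simp
  intro n
  induction n with
  | zero =>
    intro k hk
    have hk' : k = 0 ∨ k = 1 := by simp [LSW] at hk; omega
    rcases hk' with rfl | rfl <;> simp [LSW, LSmu, LSg] <;> exact hK0
  | succ n ih =>
    intro k hk
    have hflat : LSW L S (n+1) = (LSW L S n).flatMap (LSf L S) := rfl
    rw [hflat] at hk ⊢
    obtain ⟨u, p, hu, htake, hp⟩ := LSf_take L S hL (LSW L S n) k hk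
    set t : ℝ := ((LSW L S n).length : ℝ) with htdef
    set t' : ℝ := (((LSW L S n).flatMap (LSf L S)).length : ℝ) with ht'def
    clear_value t t'
    have ht0 : 0 ≤ t := by rw [htdef]; positivity
    have ht'0 : 0 ≤ t' := by rw [ht'def]; positivity
    have hju : (LSW L S n).take u.length = u := (List.prefix_iff_eq_take.mp hu).symm
    have hj : u.length ≤ (LSW L S n).length := hu.length_le
    -- k = |σ(u)| + |p|
    have klen : k = (u.flatMap (LSf L S)).length + p.length := by
      have := congrArg List.length htake
      rwa [List.length_take, Nat.min_eq_left hk, List.length_append] at this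
    have hmu' : LSmu β (n+1) (((LSW L S n).flatMap (LSf L S)).take k)
        = LSmu β n u + LSmu β (n+1) p := by
      rw [htake, LSmu_append, LSmu_flatMap L S β hβ]
    have hpow : (0:ℝ) < β ^ (n+1) := by positivity
    have h1 := LSmu_len L S β hβ n u
    have h2 := LSmu_len L S β hβ n (LSW L S n)
    rw [LSmu_total L S β hβ n] at h2
    rw [← ht'def, ← htdef, ← hqdef] at h2
    rw [← hqdef] at h1
    have key : ((u.flatMap (LSf L S)).length : ℝ) - t' * LSmu β n u
        = -q * ((u.length : ℝ) - t * LSmu β n u) := by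
      apply mul_left_cancel₀ (ne_of_gt hpow)
      linear_combination h1 - LSmu β n u * h2
    have ihj := ih u.length hj
    rw [hju] at ihj
    -- bound for the partial block p
    have hp0 : 0 ≤ LSmu β (n+1) p := LSmu_nonneg β hβ0 (n+1) p
    have hp1 : LSmu β (n+1) p ≤ (p.length : ℝ) * β ^ (n+1) := LSmu_le β hβ0 hβ1 (n+1) p
    have hplen : (p.length : ℝ) ≤ (L + S : ℝ) := by exact_mod_cast hp
    have ht'b : t' * β ^ (n+1) ≤ 1 + q := by
      nlinarith [mul_nonneg (mul_nonneg hq0 ht0) (le_of_lt hpow)]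
    have hLS0 : (0:ℝ) ≤ (L + S : ℝ) := by positivity
    have hpc0 : (0:ℝ) ≤ (p.length : ℝ) := Nat.cast_nonneg _
    have hq1' : (0:ℝ) ≤ 1 + q := by linarith
    have hpbound : |(p.length : ℝ) - t' * LSmu β (n+1) p| ≤ (L + S : ℝ) * (2 + q) := by
      have e1 := mul_le_mul_of_nonneg_left hp1 ht'0
      have e2 := mul_le_mul_of_nonneg_right ht'b hpc0
      have e3 := mul_le_mul_of_nonneg_left hplen hq1'
      have e4 := mul_nonneg hLS0 hq1'
      have e5 := mul_nonneg ht'0 hp0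
      rw [abs_le]
      constructor
      · linarith
      · linarith
    -- combine
    have hksplit : (k : ℝ) = ((u.flatMap (LSf L S)).length : ℝ) + (p.length : ℝ) := by
      exact_mod_cast congrArg (Nat.cast (R := ℝ)) klen
    have hexp : (k : ℝ) - t' * LSmu β (n+1) (((LSW L S n).flatMap (LSf L S)).take k)
        = -q * ((u.length : ℝ) - t * LSmu β n u)
          + ((p.length : ℝ) - t' * LSmu β (n+1) p) := by
      rw [hmu', hksplit]; linear_combination key
    rw [hexp]
    calc |(-q) * ((u.length : ℝ) - t * LSmu β n u)
          + ((p.length : ℝ) - t' * LSmu β (n+1) p)|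
        ≤ |(-q) * ((u.length : ℝ) - t * LSmu β n u)|
          + |(p.length : ℝ) - t' * LSmu β (n+1) p| := abs_add_le _ _
      _ ≤ q * K + (L + S : ℝ) * (2 + q) := by
          rw [abs_mul, abs_neg, abs_of_nonneg hq0]
          exact add_le_add (mul_le_mul_of_nonneg_left ihj hq0) hpbound
      _ ≤ K := by linarith [hKq]

private lemma filter_initial (P : ℕ → Prop) [DecidablePred P]
    (hP : ∀ i j : ℕ, i ≤ j → P j → P i) :
    ∀ n, (Finset.range n).filter P = Finset.range (((Finset.range n).filter P).card) := by
  intro n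
  induction n with
  | zero => simp
  | succ n ih =>
    by_cases hPn : P n
    · have hall : (Finset.range (n+1)).filter P = Finset.range (n+1) := by
        apply Finset.filter_true_of_mem
        intro j hj
        exact hP j n (by have := Finset.mem_range.mp hj; omega) hPn
      rw [hall, Finset.card_range]
    · have h2 : (Finset.range (n+1)).filter P = (Finset.range n).filter P := by
        rw [Finset.range_add_one, Finset.filter_insert, if_neg hPn]
      rw [h2, ih, Finset.card_range]

private lemma lep_eq (L S : ℕ) (β : ℝ) (hβ0 : 0 < β) (hβ1 : β < 1) (n k : ℕ) :
    lep L S β n k = LSmu β n ((LSW L S n).take k) := by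
  rw [lep, LSpart_eq L S β hβ0 hβ1, ← List.map_take]; rfl

private lemma tlen (L S : ℕ) (β : ℝ) (hβ0 : 0 < β) (hβ1 : β < 1) (n : ℕ) :
    (LSpart L S β n).length = (LSW L S n).length := by
  rw [LSpart_eq L S β hβ0 hβ1]; simp

private lemma LSW_len_pos (L S : ℕ) (β : ℝ)
    (hβ : (L : ℝ) * β + (S : ℝ) * β ^ 2 = 1) (n : ℕ) : 0 < (LSW L S n).length := by
  rcases Nat.eq_zero_or_pos (LSW L S n).length with h | h
  · exfalso
    have h2 := LSmu_total L S β hβ n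
    rw [List.length_eq_zero_iff.mp h] at h2
    simp [LSmu] at h2
  · exact h

private lemma LSpart_pos (L S : ℕ) (β : ℝ) (hβ0 : 0 < β) (hβ1 : β < 1) (n : ℕ) :
    ∀ x ∈ LSpart L S β n, 0 < x := by
  rw [LSpart_eq L S β hβ0 hβ1]
  intro x hx
  obtain ⟨c, _, rfl⟩ := List.mem_map.mp hx
  cases c <;> simp [LSg] <;> positivity

private lemma lep_mono (L S : ℕ) (β : ℝ) (hβ0 : 0 < β) (hβ1 : β < 1) (n : ℕ) :
    Monotone (lep L S β n) := by
  apply monotone_nat_of_le_succ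
  intro j
  by_cases hj : j < (LSpart L S β n).length
  · rw [lep, lep, List.sum_take_succ _ j hj]
    have := LSpart_pos L S β hβ0 hβ1 n _ (List.getElem_mem hj)
    linarith
  · rw [lep, lep, List.take_of_length_le (by omega), List.take_of_length_le (by omega)]

private lemma lep_zero (L S : ℕ) (β : ℝ) (n : ℕ) : lep L S β n 0 = 0 := by simp [lep]

private lemma lep_top (L S : ℕ) (β : ℝ) (hβ0 : 0 < β) (hβ1 : β < 1)
    (hβ : (L : ℝ) * β + (S : ℝ) * β ^ 2 = 1) (n : ℕ) :
    lep L S β n ((LSpart L S β n).length) = 1 := by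
  rw [lep, List.take_length, LSpart_eq L S β hβ0 hβ1]
  exact LSmu_total L S β hβ n

private lemma delta_bound (L S : ℕ) (hL : 0 < L) (hS : 0 < S) (hLS : S < L + 1)
    (β : ℝ) (hβ0 : 0 < β) (hβ1 : β < 1)
    (hβ : (L : ℝ) * β + (S : ℝ) * β ^ 2 = 1) (n : ℕ) :
    ∀ j ≤ (LSpart L S β n).length,
      |(j : ℝ) - ((LSpart L S β n).length : ℝ) * lep L S β n j|
        ≤ ((L + S : ℝ) * (2 + (S : ℝ) * β)) / (1 - (S : ℝ) * β) := by
  intro j hj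
  rw [lep_eq L S β hβ0 hβ1, tlen L S β hβ0 hβ1]
  exact main_delta L S hL hS hLS β hβ0 hβ1 hβ n j (by rwa [tlen L S β hβ0 hβ1] at hj)

/-- If `S < L + 1`, the discrepancy `D(ρⁿ)` has the same order as `1/tₙ`: there exist
constants `0 < c ≤ C`, depending only on `L` and `S`, with
`c/tₙ ≤ D(ρⁿ) ≤ C/tₙ` for all `n ≥ 1`. -/
theorem disc_order_of_S_lt (L S : ℕ) (hL : 0 < L) (hS : 0 < S) (hLS : S < L + 1)
    (β : ℝ) (hβ0 : 0 < β) (hβ1 : β < 1)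
    (hβ : (L : ℝ) * β + (S : ℝ) * β ^ 2 = 1) :
    ∃ c C : ℝ, 0 < c ∧ c ≤ C ∧ ∀ n : ℕ, 1 ≤ n →
      c / ((LSpart L S β n).length : ℝ) ≤ disc L S β n ∧
      disc L S β n ≤ C / ((LSpart L S β n).length : ℝ) := by
  classical
  set K : ℝ := ((L + S : ℝ) * (2 + (S : ℝ) * β)) / (1 - (S : ℝ) * β) with hKdef
  have hSL : (S : ℝ) ≤ L := by exact_mod_cast Nat.lt_succ_iff.mp hLS
  have hq1 : (S : ℝ) * β < 1 := by nlinarith [sq_nonneg β, hβ0]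
  have hq0 : 0 ≤ (S : ℝ) * β := by positivity
  have hK0 : 0 ≤ K := by
    rw [hKdef]
    apply div_nonneg
    · have : (0:ℝ) ≤ (L + S : ℝ) := by positivity
      nlinarith
    · linarith
  clear_value K
  refine ⟨1, 2 * K + 2, one_pos, by linarith, ?_⟩
  intro n _
  set tn : ℕ := (LSpart L S β n).length with htn
  have htpos : 0 < tn := by
    rw [htn, tlen L S β hβ0 hβ1]; exact LSW_len_pos L S β hβ n
  have htR : (0:ℝ) < (tn : ℝ) := by exact_mod_cast htpos
  have hdelta : ∀ j ≤ tn, |(j : ℝ) - (tn : ℝ) * lep L S β n j| ≤ K := by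
    intro j hj
    rw [hKdef]
    exact delta_bound L S hL hS hLS β hβ0 hβ1 hβ n j hj
  have hmono := lep_mono L S β hβ0 hβ1 n
  have hlep0 : lep L S β n 0 = 0 := lep_zero L S β n
  have hleptop : lep L S β n tn = 1 := lep_top L S β hβ0 hβ1 hβ n
  -- counting function
  set kx : ℝ → ℕ :=
    fun x => ((Finset.range tn).filter (fun j => lep L S β n j < x)).card with hkx
  have hinit : ∀ x : ℝ, (Finset.range tn).filter (fun j => lep L S β n j < x)
      = Finset.range (kx x) := by
    intro x
    exact filter_initial _ (fun i j hij hj => lt_of_le_of_lt (hmono hij) hj) tn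
  have hc1 : ∀ (x : ℝ) (j : ℕ), j < kx x → lep L S β n j < x := by
    intro x j hj
    have : j ∈ (Finset.range tn).filter (fun j => lep L S β n j < x) := by
      rw [hinit x]; exact Finset.mem_range.mpr hj
    exact (Finset.mem_filter.mp this).2
  have hc3 : ∀ x : ℝ, kx x ≤ tn := by
    intro x
    exact le_trans (Finset.card_filter_le _ _) (le_of_eq (Finset.card_range tn))
  have hc2 : ∀ (x : ℝ) (j : ℕ), j < tn → kx x ≤ j → x ≤ lep L S β n j := by
    intro x j hjt hkj
    by_contra hlt
    push_neg at hlt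
    have : j ∈ (Finset.range tn).filter (fun j => lep L S β n j < x) :=
      Finset.mem_filter.mpr ⟨Finset.mem_range.mpr hjt, hlt⟩
    rw [hinit x] at this
    exact absurd (Finset.mem_range.mp this) (not_lt.mpr hkj)
  have hc5 : ∀ x y : ℝ, x ≤ y → kx x ≤ kx y := by
    intro x y hxy
    apply Finset.card_le_card
    intro j hj
    rw [Finset.mem_filter] at hj ⊢
    exact ⟨hj.1, lt_of_lt_of_le hj.2 hxy⟩
  -- main deviation bound for kx
  have hc4 : ∀ x : ℝ, 0 ≤ x → x ≤ 1 → |(kx x : ℝ) - (tn : ℝ) * x| ≤ K + 1 := by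
    intro x hx0 hx1
    rcases Nat.eq_zero_or_pos (kx x) with hm | hm
    · have hxle : x ≤ lep L S β n 0 := hc2 x 0 htpos (le_of_eq hm)
      rw [hlep0] at hxle
      have hxeq : x = 0 := le_antisymm hxle hx0
      rw [hm, hxeq]
      simp [hK0]
      linarith
    · obtain ⟨m, hm'⟩ : ∃ m, kx x = m + 1 := ⟨kx x - 1, by omega⟩
      have hmlt : m < kx x := by omega
      have hmtn : m + 1 ≤ tn := by have := hc3 x; omega
      have hlow : lep L S β n m < x := hc1 x m hmlt
      have hd1 := hdelta m (by omega)
      rw [abs_le] at hd1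
      have hlow2 : (m : ℝ) - K ≤ (tn : ℝ) * lep L S β n m := by linarith [hd1.2]
      have hlow3 : (tn : ℝ) * lep L S β n m < (tn : ℝ) * x :=
        mul_lt_mul_of_pos_left hlow htR
      have hup : (tn : ℝ) * x ≤ (m : ℝ) + 1 + K := by
        rcases lt_or_eq_of_le hmtn with hlt | heq
        · have hxle : x ≤ lep L S β n (m + 1) := hc2 x (m + 1) hlt (by omega)
          have hd2 := hdelta (m + 1) (by omega)
          rw [abs_le] at hd2
          have : (tn : ℝ) * lep L S β n (m + 1) ≤ (m : ℝ) + 1 + K := by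
            push_cast at hd2 ⊢
            linarith [hd2.1]
          calc (tn : ℝ) * x ≤ (tn : ℝ) * lep L S β n (m + 1) :=
                mul_le_mul_of_nonneg_left hxle (le_of_lt htR)
            _ ≤ (m : ℝ) + 1 + K := this
        · have : (tn : ℝ) * x ≤ (tn : ℝ) := by nlinarith
          have htm : (tn : ℝ) = (m : ℝ) + 1 := by exact_mod_cast heq.symm
          linarith
      rw [hm', abs_le]
      push_cast
      constructor <;> linarith
  -- counting formula
  have hcount : ∀ a b : ℝ,
      ({j : Fin tn | a ≤ lep L S β n ↑j ∧ lep L S β n ↑j < b}).ncard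
        = kx b - kx a := by
    intro a b
    have hset : {j : Fin tn | a ≤ lep L S β n ↑j ∧ lep L S β n ↑j < b}
        = (((Finset.univ : Finset (Fin tn)).filter
            (fun j : Fin tn => a ≤ lep L S β n ↑j ∧ lep L S β n ↑j < b)) :
              Set (Fin tn)) := by
      ext j; simp
    rw [hset, Set.ncard_coe_finset]
    have hbij : ((Finset.univ : Finset (Fin tn)).filter
          (fun j : Fin tn => a ≤ lep L S β n ↑j ∧ lep L S β n ↑j < b)).card
        = ((Finset.range tn).filter
            (fun j => a ≤ lep L S β n j ∧ lep L S β n j < b)).card := by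
      apply Finset.card_bij (fun (j : Fin tn) _ => (j : ℕ))
      · intro j hj
        simp only [Finset.mem_filter, Finset.mem_range] at hj ⊢
        exact ⟨j.isLt, hj.2⟩
      · intro j₁ _ j₂ _ h
        exact Fin.val_injective h
      · intro j hj
        simp only [Finset.mem_filter, Finset.mem_range] at hj
        exact ⟨⟨j, hj.1⟩, by simp [hj.2], rfl⟩
    rw [hbij]
    have hICO : (Finset.range tn).filter
          (fun j => a ≤ lep L S β n j ∧ lep L S β n j < b)
        = Finset.Ico (kx a) (kx b) := by
      ext j
      simp only [Finset.mem_filter, Finset.mem_range, Finset.mem_Ico]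
      constructor
      · rintro ⟨hjt, ha, hb⟩
        constructor
        · by_contra hja
          push_neg at hja
          exact absurd (hc1 a j hja) (not_lt.mpr ha)
        · by_contra hjb
          push_neg at hjb
          exact absurd (hc2 b j hjt hjb) (not_le.mpr hb)
      · rintro ⟨h1, h2⟩
        have hjt : j < tn := lt_of_lt_of_le h2 (hc3 b)
        exact ⟨hjt, hc2 a j hjt h1, hc1 b j h2⟩
    rw [hICO, Nat.card_Ico]
  -- per-interval bound
  have hbound : ∀ a b : ℝ, 0 ≤ a → a < b → b ≤ 1 →
      |((({j : Fin tn | a ≤ lep L S β n ↑j ∧ lep L S β n ↑j < b}).ncard : ℝ)) / (tn : ℝ)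
        - (b - a)| ≤ (2 * K + 2) / (tn : ℝ) := by
    intro a b ha hab hb1
    have hka := hc5 a b (le_of_lt hab)
    rw [hcount a b]
    have hcast : ((kx b - kx a : ℕ) : ℝ) = (kx b : ℝ) - (kx a : ℝ) := by
      push_cast [Nat.cast_sub hka]; ring
    rw [hcast]
    have h4a := hc4 a ha (le_trans (le_of_lt hab) hb1)
    have h4b := hc4 b (le_trans ha (le_of_lt hab)) hb1
    have hnum : |((kx b : ℝ) - (kx a : ℝ)) - (tn : ℝ) * (b - a)| ≤ 2 * K + 2 := by
      have : ((kx b : ℝ) - (kx a : ℝ)) - (tn : ℝ) * (b - a)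
          = ((kx b : ℝ) - (tn : ℝ) * b) - ((kx a : ℝ) - (tn : ℝ) * a) := by ring
      rw [this]
      calc |((kx b : ℝ) - (tn : ℝ) * b) - ((kx a : ℝ) - (tn : ℝ) * a)|
          ≤ |(kx b : ℝ) - (tn : ℝ) * b| + |(kx a : ℝ) - (tn : ℝ) * a| := abs_sub _ _
        _ ≤ 2 * K + 2 := by linarith
    have hrw : ((kx b : ℝ) - (kx a : ℝ)) / (tn : ℝ) - (b - a)
        = (((kx b : ℝ) - (kx a : ℝ)) - (tn : ℝ) * (b - a)) / (tn : ℝ) := by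
      field_simp
    rw [hrw, abs_div, abs_of_pos htR]
    gcongr
  -- the discrepancy set
  have hdisc : disc L S β n = sSup {x : ℝ | ∃ a b : ℝ, 0 ≤ a ∧ a < b ∧ b ≤ 1 ∧
      x = |(({j : Fin tn | a ≤ lep L S β n ↑j ∧ lep L S β n ↑j < b}).ncard : ℝ) /
        (tn : ℝ) - (b - a)|} := rfl
  set DS : Set ℝ := {x : ℝ | ∃ a b : ℝ, 0 ≤ a ∧ a < b ∧ b ≤ 1 ∧
      x = |(({j : Fin tn | a ≤ lep L S β n ↑j ∧ lep L S β n ↑j < b}).ncard : ℝ) /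
        (tn : ℝ) - (b - a)|} with hDS
  have hub : ∀ x ∈ DS, x ≤ (2 * K + 2) / (tn : ℝ) := by
    rintro x ⟨a, b, ha, hab, hb1, rfl⟩
    exact hbound a b ha hab hb1
  have hnonempty : DS.Nonempty :=
    ⟨_, ⟨0, 1, le_refl 0, one_pos, le_refl 1, rfl⟩⟩
  have hbddAbove : BddAbove DS := ⟨_, hub⟩
  constructor
  · -- lower bound
    rw [hdisc]
    apply le_of_forall_pos_le_add
    intro ε hε
    set b₀ : ℝ := min ε 1 with hb₀
    have hb₀pos : 0 < b₀ := lt_min hε one_pos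
    have hb₀1 : b₀ ≤ 1 := min_le_right _ _
    have hb₀ε : b₀ ≤ ε := min_le_left _ _
    have helem : |(({j : Fin tn | 0 ≤ lep L S β n ↑j ∧ lep L S β n ↑j < b₀}).ncard : ℝ) /
        (tn : ℝ) - (b₀ - 0)| ∈ DS := ⟨0, b₀, le_refl 0, hb₀pos, hb₀1, rfl⟩
    have hkx0 : kx 0 = 0 := by
      rw [hkx]
      simp only [Finset.card_eq_zero]
      apply Finset.filter_eq_empty_iff.mpr
      intro j _
      have : (0:ℝ) ≤ lep L S β n j := by
        have := hmono (Nat.zero_le j); rwa [hlep0] at this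
      exact not_lt.mpr this
    have hkxb : 1 ≤ kx b₀ := by
      rw [hkx]
      apply Finset.card_pos.mpr
      refine ⟨0, Finset.mem_filter.mpr ⟨Finset.mem_range.mpr htpos, ?_⟩⟩
      rw [hlep0]; exact hb₀pos
    have hcnt : (({j : Fin tn | 0 ≤ lep L S β n ↑j ∧ lep L S β n ↑j < b₀}).ncard : ℝ)
        = ((kx b₀ : ℕ) : ℝ) := by
      rw [hcount 0 b₀, hkx0]; norm_num
    have hval : 1 / (tn : ℝ) - ε ≤ |(({j : Fin tn | 0 ≤ lep L S β n ↑j ∧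
        lep L S β n ↑j < b₀}).ncard : ℝ) / (tn : ℝ) - (b₀ - 0)| := by
      have h1 : (1 : ℝ) ≤ ((kx b₀ : ℕ) : ℝ) := by exact_mod_cast hkxb
      have h2 : 1 / (tn : ℝ) ≤ ((kx b₀ : ℕ) : ℝ) / (tn : ℝ) := by
        gcongr
      calc 1 / (tn : ℝ) - ε
          ≤ ((kx b₀ : ℕ) : ℝ) / (tn : ℝ) - (b₀ - 0) := by linarith
        _ ≤ |((kx b₀ : ℕ) : ℝ) / (tn : ℝ) - (b₀ - 0)| := le_abs_self _
        _ = |(({j : Fin tn | 0 ≤ lep L S β n ↑j ∧ lep L S β n ↑j < b₀}).ncard : ℝ) /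
            (tn : ℝ) - (b₀ - 0)| := by rw [hcnt]
    have hle := le_csSup hbddAbove helem
    linarith
  · rw [hdisc]
    exact csSup_le hnonempty hub
end
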